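/- arXiv:1312.4642 — 3 statements merged into one kernel-verified Lean document; each statement's English description precedes it below -/
import Mathlib

section
/- For every small category C, every n > 0, every i with 0 < i < n, and every simplicial map F : Λ[n,i] → N(C), there is a unique simplicial map Δ[n] → N(C) whose restriction to the horn Λ[n,i] is F. -/
open CategoryTheory Simplicial

/-!
The nerve of a category is strict Segal: a simplex is determined by its spine, and every path
of composable edges is the spine of a simplex. Hence the nerve is a quasicategory, which gives
a filler. For `0 < i < n` the spine of `Δ[n]` lies in `Λ[n, i]`, so two fillers agreeing on the
horn have the same spine and coincide.
-/

namespace SSet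

lemma spine_yonedaEquiv {X : SSet} (n : ℕ) (G : (Δ[n] : SSet) ⟶ X) :
    X.spine n (yonedaEquiv G) = (stdSimplex.spineId n).map G := by
  ext j <;> exact (NatTrans.naturality_apply G _ _).symm

lemma Path.map_map {X Y Z : SSet} {n : ℕ} (f : Path X n) (σ : X ⟶ Y) (τ : Y ⟶ Z) :
    (f.map σ).map τ = f.map (σ ≫ τ) := rfl

lemma IsStrictSegal.hom_ext_of_horn {X : SSet} [IsStrictSegal X] {m : ℕ} {i : Fin (m + 3)}
    (h₀ : 0 < i) (hₙ : i < Fin.last (m + 2)) {G G' : (Δ[m + 2] : SSet) ⟶ X}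
    (h : Λ[m + 2, i].ι ≫ G = Λ[m + 2, i].ι ≫ G') : G = G' := by
  apply yonedaEquiv.injective
  apply (StrictSegal.ofIsStrictSegal X).spineInjective
  change X.spine _ _ = X.spine _ _
  rw [spine_yonedaEquiv, spine_yonedaEquiv, ← horn.spineId_map_hornInclusion i h₀ hₙ,
    Path.map_map, Path.map_map, h]

end SSet

/-- For every small category `C`, every `n > 0`, every `i` with `0 < i < n`, and every
simplicial map `F : Λ[n, i] → N(C)`, there is a unique simplicial map `Δ[n] → N(C)`
whose restriction to the horn `Λ[n, i]` is `F`. -/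
theorem nerve_unique_inner_horn_filler (C : Type u) [SmallCategory C]
    (n : ℕ) (i : Fin (n + 1)) (h0 : 0 < (i : ℕ)) (hn : (i : ℕ) < n)
    (F : (Λ[n, i] : SSet) ⟶ nerve C) :
    ∃! G : (Δ[n] : SSet) ⟶ nerve C, Λ[n, i].ι ≫ G = F := by
  obtain ⟨m, rfl⟩ : ∃ m, n = m + 2 := ⟨n - 2, by omega⟩
  have h₀ : 0 < i := Fin.lt_def.mpr h0
  have hₙ : i < Fin.last (m + 2) := Fin.lt_def.mpr hn
  obtain ⟨G, hG⟩ := SSet.Quasicategory.hornFilling h₀ hₙ F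
  exact ⟨G, hG.symm, fun G' hG' => SSet.IsStrictSegal.hom_ext_of_horn h₀ hₙ (hG'.trans hG)⟩
end

section
/- Let A be a Grothendieck abelian category and Q a fibrant cochain complex in A. Then Q is q-injective: for every acyclic cochain complex M in A, every chain map M → Q is chain homotopic to zero. -/
open CategoryTheory CategoryTheory.Limits

universe v u

variable {A : Type u} [Category.{v} A] [Abelian A]

/-- A cochain complex `Q` is (injectively) fibrant if every chain map `Y ⟶ Q` extends along
any chain map `s : Y ⟶ X` that is both a degreewise monomorphism and a quasi-isomorphism. -/
def IsFibrantComplex (Q : CochainComplex A ℤ) : Prop :=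
  ∀ (X Y : CochainComplex A ℤ) (s : Y ⟶ X), (∀ n : ℤ, Mono (s.f n)) → QuasiIso s →
    ∀ f : Y ⟶ Q, ∃ g : X ⟶ Q, s ≫ g = f

/-- In a Grothendieck abelian category, every fibrant cochain complex `Q` is q-injective:
every chain map to `Q` from an acyclic complex is chain homotopic to zero. -/
theorem fibrant_is_qInjective
    [HasFilteredColimits A] [AB5 A] [HasSeparator A]
    (Q : CochainComplex A ℤ) (hQ : IsFibrantComplex Q) :
    ∀ M : CochainComplex A ℤ, (∀ n : ℤ, IsZero (M.homology n)) →
      ∀ f : M ⟶ Q, Nonempty (Homotopy f 0) := by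
  intro M hM f
  let φ : M ⟶ M := 𝟙 M
  have hCone : ∀ n : ℤ, IsZero ((CochainComplex.mappingCone φ).homology n) := by
    intro n
    rw [IsZero.iff_id_eq_zero]
    have := (CochainComplex.mappingCone.homotopyToZeroOfId M).homologyMap_eq n
    simpa using this
  have hmono : ∀ n : ℤ, Mono ((CochainComplex.mappingCone.inr φ).f n) := by
    intro n
    exact (SplitMono.mk ((CochainComplex.mappingCone.snd φ).v n n (add_zero n))
      (CochainComplex.mappingCone.inr_f_snd_v φ n)).mono
  have hqis : QuasiIso (CochainComplex.mappingCone.inr φ) := by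
    constructor
    intro n
    rw [quasiIsoAt_iff_isIso_homologyMap]
    refine ⟨0, ?_, ?_⟩
    · exact (hM n).eq_of_src _ _
    · exact (hCone n).eq_of_src _ _
  obtain ⟨g, hg⟩ := hQ _ _ (CochainComplex.mappingCone.inr φ) hmono hqis f
  refine ⟨(CochainComplex.HomComplex.Cochain.equivHomotopy f 0).symm
    ⟨(CochainComplex.mappingCone.inl φ).comp (CochainComplex.HomComplex.Cochain.ofHom g)
      (add_zero _), ?_⟩⟩
  rw [CochainComplex.HomComplex.δ_comp_ofHom, CochainComplex.mappingCone.δ_inl]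
  simp [φ, ← hg, CochainComplex.HomComplex.Cochain.ofHom_comp]
end

section
/- For small categories C and D, there is an equivalence of categories φ : Fun^R(C,D) → (Fun^L(D,C))ᵒᵖ, from the full subcategory of Fun(C,D) spanned by the right-adjoint functors to the opposite of the full subcategory of Fun(D,C) spanned by the left-adjoint functors, such that for every object g of Fun^R(C,D) there is an adjunction φ(g) ⊣ g, i.e., φ takes each right-adjoint functor g : C → D to a left adjoint of g. -/
open CategoryTheory

/-!
Choosing a left adjoint `L g` of every right adjoint `g` gives the object part. By the calculus
of mates, natural transformations `g ⟶ g'` correspond bijectively and functorially to natural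
transformations `L g' ⟶ L g` (`conjugateEquiv`), so the assignment is fully faithful as a functor
into the opposite category. It is essentially surjective because a left adjoint `G` is, up to
isomorphism, the chosen left adjoint of its right adjoint, left adjoints being unique.
-/

namespace CategoryTheory

universe v₁ v₂ u₁ u₂

variable (C : Type u₁) [Category.{v₁} C] (D : Type u₂) [Category.{v₂} D]

abbrev RightAdjoints : Type _ := ObjectProperty.FullSubcategory (fun F : C ⥤ D => F.IsRightAdjoint)

abbrev LeftAdjoints : Type _ := ObjectProperty.FullSubcategory (fun F : C ⥤ D => F.IsLeftAdjoint)

variable {C D}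

namespace RightAdjoints

instance isRightAdjoint_obj (g : RightAdjoints C D) : g.obj.IsRightAdjoint := g.property

noncomputable def adj (g : RightAdjoints C D) : g.obj.leftAdjoint ⊣ g.obj :=
  Adjunction.ofIsRightAdjoint g.obj

variable (C D)

noncomputable def leftAdjointFunctor : RightAdjoints C D ⥤ (LeftAdjoints D C)ᵒᵖ where
  obj g := .op ⟨g.obj.leftAdjoint, g.adj.isLeftAdjoint⟩
  map {g g'} f := (ObjectProperty.homMk ((conjugateEquiv g.adj g'.adj).symm f.hom)).op
  map_id g := by
    exact Quiver.Hom.unop_inj (ObjectProperty.hom_ext _ (conjugateEquiv_symm_id g.adj))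
  map_comp f f' := by
    exact Quiver.Hom.unop_inj
      (ObjectProperty.hom_ext _ (conjugateEquiv_symm_comp _ _ _ f.hom f'.hom).symm)

noncomputable def leftAdjointFunctorFullyFaithful : (leftAdjointFunctor C D).FullyFaithful where
  preimage {g g'} f := ObjectProperty.homMk (conjugateEquiv g.adj g'.adj f.unop.hom)
  map_preimage f :=
    Quiver.Hom.unop_inj (ObjectProperty.hom_ext _ (Equiv.symm_apply_apply _ f.unop.hom))
  preimage_map f := ObjectProperty.hom_ext _ (Equiv.apply_symm_apply _ f.hom)

instance leftAdjointFunctor_essSurj : (leftAdjointFunctor C D).EssSurj where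
  mem_essImage G := by
    obtain ⟨R, ⟨adjR⟩⟩ := G.unop.property.exists_rightAdjoint
    let g : RightAdjoints C D := ⟨R, adjR.isRightAdjoint⟩
    exact ⟨g, ⟨(ObjectProperty.isoMk _ (adjR.leftAdjointUniq g.adj)).op⟩⟩

instance leftAdjointFunctor_isEquivalence : (leftAdjointFunctor C D).IsEquivalence where
  faithful := (leftAdjointFunctorFullyFaithful C D).faithful
  full := (leftAdjointFunctorFullyFaithful C D).full

end RightAdjoints

end CategoryTheory

/-- For small categories `C` and `D`, there is an equivalence of categories
`φ : Fun^R(C,D) → (Fun^L(D,C))ᵒᵖ` from the full subcategory of `Fun(C,D)` spanned by the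
right-adjoint functors to the opposite of the full subcategory of `Fun(D,C)` spanned by
the left-adjoint functors, taking each right-adjoint functor `g` to a left adjoint of `g`. -/
theorem rightAdjoints_equiv_op_leftAdjoints
    (C : Type u) (D : Type v) [SmallCategory C] [SmallCategory D] :
    ∃ φ : ObjectProperty.FullSubcategory (fun F : C ⥤ D => F.IsRightAdjoint) ⥤
        (ObjectProperty.FullSubcategory (fun G : D ⥤ C => G.IsLeftAdjoint))ᵒᵖ,
      φ.IsEquivalence ∧
        ∀ g : ObjectProperty.FullSubcategory (fun F : C ⥤ D => F.IsRightAdjoint),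
          Nonempty ((φ.obj g).unop.obj ⊣ g.obj) :=
  ⟨RightAdjoints.leftAdjointFunctor C D, inferInstance, fun g => ⟨RightAdjoints.adj g⟩⟩
end
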